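/- arXiv:1207.2758 — 2 statements merged into one kernel-verified Lean document; each statement's English description precedes it below -/
import Mathlib

section
/- Let Λ = Tens_S(V)/(R) be a quadratic algebra and e ∈ S ⊆ Λ an idempotent of degree 0. Then Λ/Λ(1−e)Λ ≅ Tens_{eSe}(eVe)/(π⊗π(R)), where π : V → eVe is v ↦ eve. In particular Λ/Λ(1−e)Λ is again a quadratic algebra. -/
set_option synthInstance.maxHeartbeats 1000000
set_option maxHeartbeats 2000000

/-!
Let `Λ = Tens_S(V)/(R)` be a quadratic algebra over a basic semisimple base `S` (a finite
product of copies of `k`), and `e ∈ S` an idempotent of degree `0`.  Then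
`Λ/Λ(1−e)Λ ≅ Tens_{eSe}(eVe)/(π⊗π(R))`, where `π : V → eVe` is `v ↦ eve`; in particular
`Λ/Λ(1−e)Λ` is again quadratic.  We realise `eSe` as `S/(1−e)` and `eVe` as `V/(1−e)V`
(which for an idempotent `e` are canonically isomorphic to the corners `eSe`, `eVe`), and
`π ⊗ π` as the induced base-change map on tensor algebras.
-/

open TensorProduct

section Setup

variable (S : Type) [CommRing S] (V : Type) [AddCommGroup V] [Module S V]

/-- The inclusion of `V ⊗_S V` as the degree-two component of the tensor algebra. -/
noncomputable def iota2 : (V ⊗[S] V) →ₗ[S] TensorAlgebra S V :=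
  TensorProduct.lift
    (((LinearMap.mul S (TensorAlgebra S V)).comp (TensorAlgebra.ι S)).compl₂
      (TensorAlgebra.ι S))

/-- The relations presenting the quadratic algebra `Λ = Tens_S(V)/(R)`. -/
def qRel (R : Set (V ⊗[S] V)) : TensorAlgebra S V → TensorAlgebra S V → Prop :=
  fun u v => (∃ r ∈ R, u = iota2 S V r) ∧ v = 0

/-- The quadratic algebra `Λ = Tens_S(V)/(R)`. -/
def Lam (R : Set (V ⊗[S] V)) : Type := RingQuot (qRel S V R)

noncomputable instance (R : Set (V ⊗[S] V)) : Ring (Lam S V R) :=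
  inferInstanceAs (Ring (RingQuot (qRel S V R)))

/-- The relations killing the two-sided ideal generated by `1 − e`. -/
def eKill (R : Set (V ⊗[S] V)) (e : S) : Lam S V R → Lam S V R → Prop :=
  fun u v =>
    u = RingQuot.mkRingHom (qRel S V R) (algebraMap S (TensorAlgebra S V) (1 - e)) ∧ v = 0

/-- The quotient algebra `Λ/Λ(1−e)Λ`. -/
def LamMod (R : Set (V ⊗[S] V)) (e : S) : Type := RingQuot (eKill S V R e)

noncomputable instance (R : Set (V ⊗[S] V)) (e : S) : Ring (LamMod S V R e) :=
  inferInstanceAs (Ring (RingQuot (eKill S V R e)))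

/-- The corner base ring `eSe`, realised as `S/(1−e)`. -/
def Sbar (e : S) : Type := S ⧸ Ideal.span {(1 : S) - e}

noncomputable instance (e : S) : CommRing (Sbar S e) :=
  inferInstanceAs (CommRing (S ⧸ Ideal.span {(1 : S) - e}))

/-- The corner bimodule `eVe`, realised as `V/(1−e)V`. -/
def Vbar (e : S) : Type :=
  V ⧸ ((Ideal.span {(1 : S) - e}) • (⊤ : Submodule S V))

noncomputable instance (e : S) : AddCommGroup (Vbar S V e) :=
  inferInstanceAs (AddCommGroup (V ⧸ ((Ideal.span {(1 : S) - e}) • (⊤ : Submodule S V))))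

noncomputable instance (e : S) : Module (Sbar S e) (Vbar S V e) :=
  inferInstanceAs (Module (S ⧸ Ideal.span {(1 : S) - e})
    (V ⧸ ((Ideal.span {(1 : S) - e}) • (⊤ : Submodule S V))))

/-- The tensor algebra `Tens_{eSe}(eVe)` is an `S`-algebra via `S → S/(1−e)`. -/
noncomputable instance (e : S) : Algebra S (TensorAlgebra (Sbar S e) (Vbar S V e)) :=
  RingHom.toAlgebra'
    ((algebraMap (Sbar S e) (TensorAlgebra (Sbar S e) (Vbar S V e))).comp
      (Ideal.Quotient.mk (Ideal.span {(1 : S) - e})))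
    (fun c x => by
      exact Algebra.commutes (R := Sbar S e) (Ideal.Quotient.mk (Ideal.span {(1 : S) - e}) c) x)

/-- The image of `s` in `eSe = S/(1−e)`. -/
def mkS (e : S) (s : S) : Sbar S e := Ideal.Quotient.mk (Ideal.span {(1 : S) - e}) s

/-- The image of `v` under `π : V → eVe = V/(1−e)V`. -/
def mkV (e : S) (v : V) : Vbar S V e := Submodule.Quotient.mk v

/-- The map `π : V → eVe` followed by the canonical inclusion into the tensor algebra. -/
noncomputable def jmap (e : S) : V →ₗ[S] TensorAlgebra (Sbar S e) (Vbar S V e) where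
  toFun v := TensorAlgebra.ι (Sbar S e) (mkV S V e v)
  map_add' v w := by
    show TensorAlgebra.ι (Sbar S e) (mkV S V e (v + w)) =
      TensorAlgebra.ι (Sbar S e) (mkV S V e v) + TensorAlgebra.ι (Sbar S e) (mkV S V e w)
    rw [show mkV S V e (v + w) = mkV S V e v + mkV S V e w from rfl, map_add]
  map_smul' s v := by
    show TensorAlgebra.ι (Sbar S e) (mkV S V e (s • v))
      = s • TensorAlgebra.ι (Sbar S e) (mkV S V e v)
    rw [show mkV S V e (s • v) = mkS S e s • mkV S V e v from rfl, map_smul,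
      Algebra.smul_def, Algebra.smul_def]
    rfl

/-- The base-change homomorphism `π : Tens_S(V) → Tens_{eSe}(eVe)`. -/
noncomputable def Theta (e : S) : TensorAlgebra S V →ₐ[S] TensorAlgebra (Sbar S e) (Vbar S V e) :=
  TensorAlgebra.lift S (jmap S V e)

/-- The relations `π⊗π(R)` in `Tens_{eSe}(eVe)`. -/
def qRelCorner (R : Set (V ⊗[S] V)) (e : S) :
    TensorAlgebra (Sbar S e) (Vbar S V e) → TensorAlgebra (Sbar S e) (Vbar S V e) → Prop :=
  fun u v => (∃ r ∈ R, u = Theta S V e (iota2 S V r)) ∧ v = 0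

/-- The quadratic algebra `Tens_{eSe}(eVe)/(π⊗π(R))`. -/
def LamCorner (R : Set (V ⊗[S] V)) (e : S) : Type := RingQuot (qRelCorner S V R e)

noncomputable instance (R : Set (V ⊗[S] V)) (e : S) : Ring (LamCorner S V R e) :=
  inferInstanceAs (Ring (RingQuot (qRelCorner S V R e)))

end Setup

/-!
Both sides are quotients of `Tens_S(V)`: the left one by the projection, the right one through
`π`, which is onto. The two projections factor through each other. `π` kills `1 − e` and maps
`R` into `π⊗π(R)`. Conversely, `1 − e` acts as zero on `Λ/Λ(1−e)Λ`, so `V → Λ/Λ(1−e)Λ` factors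
through `eVe` as an `eSe`-linear map, and the universal property of `Tens_{eSe}(eVe)` extends it
to an algebra map that kills `π⊗π(R)`.
-/

def RingEquiv.ofMutualFactorization {A B C : Type*} [Semiring A] [Semiring B] [Semiring C]
    {f : A →+* B} {g : A →+* C} (hf : Function.Surjective f) (hg : Function.Surjective g)
    (φ : B →+* C) (ψ : C →+* B) (hφ : ∀ a, φ (f a) = g a) (hψ : ∀ a, ψ (g a) = f a) :
    B ≃+* C :=
  RingEquiv.ofRingHom φ ψ
    (RingHom.ext <| hg.forall.2 fun a => by simp [hφ, hψ])
    (RingHom.ext <| hf.forall.2 fun a => by simp [hφ, hψ])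

noncomputable abbrev Ideal.Quotient.algebraOfLEKer {S A : Type*} [CommRing S] [Ring A]
    [Algebra S A] (I : Ideal S) (hI : I ≤ RingHom.ker (algebraMap S A)) : Algebra (S ⧸ I) A :=
  (Ideal.Quotient.lift I (algebraMap S A) hI).toAlgebra' fun c x => by
    obtain ⟨s, rfl⟩ := Ideal.Quotient.mk_surjective c
    exact Algebra.commutes s x

section

variable (S : Type) [CommRing S] (V : Type) [AddCommGroup V] [Module S V]
  (R : Set (V ⊗[S] V)) (e : S)

noncomputable instance : Algebra S (Lam S V R) := inferInstanceAs (Algebra S (RingQuot _))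

noncomputable instance : Algebra S (LamMod S V R e) := inferInstanceAs (Algebra S (RingQuot _))

noncomputable instance : Algebra (Sbar S e) (LamCorner S V R e) :=
  inferInstanceAs (Algebra (Sbar S e) (RingQuot _))

lemma Theta_ι (v : V) :
    Theta S V e (TensorAlgebra.ι S v) = TensorAlgebra.ι (Sbar S e) (mkV S V e v) :=
  TensorAlgebra.lift_ι_apply _ _

lemma Theta_surjective : Function.Surjective (Theta S V e) := by
  intro y
  induction y using TensorAlgebra.induction with
  | algebraMap c =>
    obtain ⟨s, rfl⟩ := Ideal.Quotient.mk_surjective c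
    exact ⟨algebraMap S _ s, (Theta S V e).commutes s⟩
  | ι x =>
    obtain ⟨v, rfl⟩ := Submodule.Quotient.mk_surjective _ x
    exact ⟨TensorAlgebra.ι S v, Theta_ι S V e v⟩
  | mul a b ha hb =>
    obtain ⟨⟨a, rfl⟩, ⟨b, rfl⟩⟩ := And.intro ha hb
    exact ⟨a * b, map_mul _ a b⟩
  | add a b ha hb =>
    obtain ⟨⟨a, rfl⟩, ⟨b, rfl⟩⟩ := And.intro ha hb
    exact ⟨a + b, map_add _ a b⟩

noncomputable def Lam.mkAlgHom : TensorAlgebra S V →ₐ[S] Lam S V R :=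
  RingQuot.mkAlgHom S (qRel S V R)

lemma Lam.mkAlgHom_apply (x : TensorAlgebra S V) :
    Lam.mkAlgHom S V R x = RingQuot.mkRingHom (qRel S V R) x := by
  rw [Lam.mkAlgHom, ← RingQuot.mkAlgHom_coe S]
  rfl

lemma Lam.mkAlgHom_rel {x y : TensorAlgebra S V} (h : qRel S V R x y) :
    Lam.mkAlgHom S V R x = Lam.mkAlgHom S V R y :=
  RingQuot.mkAlgHom_rel S h

namespace LamMod

noncomputable def ofLam : Lam S V R →ₐ[S] LamMod S V R e :=
  RingQuot.mkAlgHom S (eKill S V R e)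

lemma ofLam_apply (x : Lam S V R) : ofLam S V R e x = RingQuot.mkRingHom (eKill S V R e) x := by
  rw [ofLam, ← RingQuot.mkAlgHom_coe S]
  rfl

lemma ofLam_rel {x y : Lam S V R} (h : eKill S V R e x y) : ofLam S V R e x = ofLam S V R e y :=
  RingQuot.mkAlgHom_rel S h

noncomputable def mkAlgHom : TensorAlgebra S V →ₐ[S] LamMod S V R e :=
  (ofLam S V R e).comp (Lam.mkAlgHom S V R)

lemma mkAlgHom_surjective : Function.Surjective (mkAlgHom S V R e) :=
  (RingQuot.mkAlgHom_surjective S _).comp (RingQuot.mkAlgHom_surjective S _)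

lemma mkAlgHom_iota2 {r : V ⊗[S] V} (hr : r ∈ R) : mkAlgHom S V R e (iota2 S V r) = 0 := by
  have h : qRel S V R (iota2 S V r) 0 := ⟨⟨r, hr, rfl⟩, rfl⟩
  rw [mkAlgHom, AlgHom.comp_apply, Lam.mkAlgHom_rel S V R h, map_zero, map_zero]

lemma algebraMap_one_sub : algebraMap S (LamMod S V R e) (1 - e) = 0 := by
  have h : eKill S V R e (Lam.mkAlgHom S V R (algebraMap S _ (1 - e))) 0 := by
    rw [Lam.mkAlgHom_apply]
    exact ⟨rfl, rfl⟩
  rw [← (mkAlgHom S V R e).commutes, mkAlgHom, AlgHom.comp_apply, ofLam_rel S V R e h, map_zero]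

lemma span_le_ker_algebraMap :
    Ideal.span {1 - e} ≤ RingHom.ker (algebraMap S (LamMod S V R e)) := by
  rw [Ideal.span_le, Set.singleton_subset_iff]
  exact algebraMap_one_sub S V R e

noncomputable instance : Algebra (Sbar S e) (LamMod S V R e) :=
  Ideal.Quotient.algebraOfLEKer _ (span_le_ker_algebraMap S V R e)

lemma smul_top_le_ker :
    Ideal.span {1 - e} • (⊤ : Submodule S V) ≤
      LinearMap.ker ((mkAlgHom S V R e).toLinearMap ∘ₗ TensorAlgebra.ι S) :=
  Submodule.smul_le.2 fun s hs v _ => by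
    rw [LinearMap.mem_ker, map_smul, Algebra.smul_def,
      RingHom.mem_ker.1 (span_le_ker_algebraMap S V R e hs), zero_mul]

noncomputable def ofVbar : Vbar S V e →ₗ[Sbar S e] LamMod S V R e where
  toFun := Submodule.liftQ _ _ (smul_top_le_ker S V R e)
  map_add' := map_add _
  map_smul' c x := by
    obtain ⟨s, rfl⟩ := Ideal.Quotient.mk_surjective c
    obtain ⟨v, rfl⟩ := Submodule.Quotient.mk_surjective _ x
    exact map_smul (Submodule.liftQ _ _ (smul_top_le_ker S V R e)) s (Submodule.Quotient.mk v)

noncomputable def ofCornerTensorAlgebra :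
    TensorAlgebra (Sbar S e) (Vbar S V e) →ₐ[Sbar S e] LamMod S V R e :=
  TensorAlgebra.lift _ (ofVbar S V R e)

lemma ofCornerTensorAlgebra_Theta (x : TensorAlgebra S V) :
    ofCornerTensorAlgebra S V R e (Theta S V e x) = mkAlgHom S V R e x := by
  induction x using TensorAlgebra.induction with
  | algebraMap s =>
    rw [(Theta S V e).commutes]
    exact ((ofCornerTensorAlgebra S V R e).commutes (mkS S e s)).trans
      ((mkAlgHom S V R e).commutes s).symm
  | ι v => rw [Theta_ι, ofCornerTensorAlgebra, TensorAlgebra.lift_ι_apply]; rfl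
  | mul a b ha hb => rw [map_mul, map_mul, ha, hb, map_mul]
  | add a b ha hb => rw [map_add, map_add, ha, hb, map_add]

end LamMod

namespace LamCorner

noncomputable def mkAlgHom :
    TensorAlgebra (Sbar S e) (Vbar S V e) →ₐ[Sbar S e] LamCorner S V R e :=
  RingQuot.mkAlgHom _ (qRelCorner S V R e)

lemma mkAlgHom_Theta_iota2 {r : V ⊗[S] V} (hr : r ∈ R) :
    mkAlgHom S V R e (Theta S V e (iota2 S V r)) = 0 := by
  have h : qRelCorner S V R e (Theta S V e (iota2 S V r)) 0 := ⟨⟨r, hr, rfl⟩, rfl⟩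
  exact (RingQuot.mkAlgHom_rel _ h).trans (map_zero _)

lemma mkAlgHom_Theta_one_sub : mkAlgHom S V R e (Theta S V e (algebraMap S _ (1 - e))) = 0 := by
  have h : mkS S e (1 - e) = 0 :=
    Ideal.Quotient.eq_zero_iff_mem.2 (Ideal.mem_span_singleton_self _)
  rw [(Theta S V e).commutes]
  exact ((mkAlgHom S V R e).commutes (mkS S e (1 - e))).trans (by rw [h, map_zero])

noncomputable def ofTensorAlgebra : TensorAlgebra S V →+* LamCorner S V R e :=
  (mkAlgHom S V R e).toRingHom.comp (Theta S V e).toRingHom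

lemma ofTensorAlgebra_apply (x : TensorAlgebra S V) :
    ofTensorAlgebra S V R e x = mkAlgHom S V R e (Theta S V e x) := rfl

lemma ofTensorAlgebra_surjective : Function.Surjective (ofTensorAlgebra S V R e) :=
  (RingQuot.mkAlgHom_surjective (Sbar S e) (qRelCorner S V R e)).comp (Theta_surjective S V e)

noncomputable def ofLam : Lam S V R →+* LamCorner S V R e :=
  RingQuot.lift ⟨ofTensorAlgebra S V R e, by
    rintro _ _ ⟨⟨r, hr, rfl⟩, rfl⟩
    exact (mkAlgHom_Theta_iota2 S V R e hr).trans (map_zero (ofTensorAlgebra S V R e)).symm⟩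

lemma ofLam_mkAlgHom (x : TensorAlgebra S V) :
    ofLam S V R e (Lam.mkAlgHom S V R x) = ofTensorAlgebra S V R e x :=
  (congrArg _ (Lam.mkAlgHom_apply S V R x)).trans (RingQuot.lift_mkRingHom_apply _ _ _)

noncomputable def ofLamMod : LamMod S V R e →+* LamCorner S V R e :=
  RingQuot.lift ⟨ofLam S V R e, by
    rintro _ _ ⟨rfl, rfl⟩
    rw [← Lam.mkAlgHom_apply, ofLam_mkAlgHom, ofTensorAlgebra_apply, mkAlgHom_Theta_one_sub,
      map_zero]⟩

lemma ofLamMod_ofLam (x : Lam S V R) :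
    ofLamMod S V R e (LamMod.ofLam S V R e x) = ofLam S V R e x :=
  (congrArg _ (LamMod.ofLam_apply S V R e x)).trans (RingQuot.lift_mkRingHom_apply _ _ _)

lemma ofLamMod_mkAlgHom (x : TensorAlgebra S V) :
    ofLamMod S V R e (LamMod.mkAlgHom S V R e x) = ofTensorAlgebra S V R e x :=
  (ofLamMod_ofLam S V R e _).trans (ofLam_mkAlgHom S V R e x)

noncomputable def toLamMod : LamCorner S V R e →ₐ[Sbar S e] LamMod S V R e :=
  RingQuot.liftAlgHom _ ⟨LamMod.ofCornerTensorAlgebra S V R e, by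
    rintro _ _ ⟨⟨r, hr, rfl⟩, rfl⟩
    rw [LamMod.ofCornerTensorAlgebra_Theta, LamMod.mkAlgHom_iota2 S V R e hr, map_zero]⟩

lemma toLamMod_mkAlgHom (y : TensorAlgebra (Sbar S e) (Vbar S V e)) :
    toLamMod S V R e (mkAlgHom S V R e y) = LamMod.ofCornerTensorAlgebra S V R e y :=
  RingQuot.liftAlgHom_mkAlgHom_apply _ _ _ _

lemma toLamMod_ofTensorAlgebra (x : TensorAlgebra S V) :
    toLamMod S V R e (ofTensorAlgebra S V R e x) = LamMod.mkAlgHom S V R e x :=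
  (toLamMod_mkAlgHom S V R e _).trans (LamMod.ofCornerTensorAlgebra_Theta S V R e x)

end LamCorner

end

theorem stmt_15_general (S : Type) [CommRing S] (V : Type) [AddCommGroup V] [Module S V]
    (R : Set (V ⊗[S] V)) (e : S) :
    Nonempty (LamMod S V R e ≃+* LamCorner S V R e) :=
  ⟨RingEquiv.ofMutualFactorization (LamMod.mkAlgHom_surjective S V R e)
    (LamCorner.ofTensorAlgebra_surjective S V R e) (LamCorner.ofLamMod S V R e)
    (LamCorner.toLamMod S V R e) (LamCorner.ofLamMod_mkAlgHom S V R e)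
    (LamCorner.toLamMod_ofTensorAlgebra S V R e)⟩

/-- Let `Λ = Tens_S(V)/(R)` be a quadratic algebra over a basic
semisimple base `S` (a finite product of copies of `k`) and `e ∈ S` an idempotent of
degree `0`.  Then `Λ/Λ(1−e)Λ ≅ Tens_{eSe}(eVe)/(π⊗π(R))` where `π : V → eVe` is
`v ↦ eve`; in particular `Λ/Λ(1−e)Λ` is again a quadratic algebra. -/
theorem stmt_15 (k : Type) [Field k] (S : Type) [CommRing S] [Algebra k S]
    (hS : ∃ n : ℕ, Nonempty (S ≃ₐ[k] (Fin n → k)))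
    (V : Type) [AddCommGroup V] [Module S V]
    (R : Set (V ⊗[S] V)) (e : S) (he : IsIdempotentElem e) :
    Nonempty (LamMod S V R e ≃+* LamCorner S V R e) :=
  stmt_15_general S V R e
end

section
/- Let Π_n be the preprojective algebra of type A_n (n ≥ 2), defined as the path algebra of the double quiver on vertices 1,…,n with arrows x_i : i → i+1 and y_{i+1} : i+1 → i, modulo the relations x₁y₂, x_i y_{i+1} − y_i x_{i−1} (2 ≤ i ≤ n−1), and y_n x_{n−1}. Then there is a short exact sequence of graded Π_n-Π_n-bimodules 0 → (Π_{n−1})⟨−1⟩ → Π_n → kA⃗_n → 0, where kA⃗_n is the path algebra of the linearly oriented A_n quiver viewed as a quotient of Π_n by the ideal generated by all y_i, and Π_{n−1} is inflated to a Π_n-bimodule via the quotient maps killing e_n on the left and e₁ on the right. -/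
set_option synthInstance.maxHeartbeats 1000000
set_option maxHeartbeats 2000000

/-!
Let `Π_n` (`n ≥ 2`) be the preprojective algebra of type `A_n`.  There is a short exact
sequence of `Π_n`-`Π_n`-bimodules `0 → Π_{n−1}⟨−1⟩ → Π_n → kA⃗_n → 0`, where `kA⃗_n` is the
quotient of `Π_n` by the ideal generated by the arrows `y`, and `Π_{n−1}` is inflated to a
`Π_n`-bimodule via the two quotient maps `π^r` (killing the first vertex) and `π^ℓ`
(killing the last vertex); the embedding sends `e_i ↦ y_{i+1}` (which accounts for the
degree shift `⟨−1⟩`).  Below `n = m + 2`, so `Π_n` has vertices `Fin (m+2)` and `Π_{n−1}`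
has vertices `Fin (m+1)`.
-/

/-- Generators of the preprojective algebra on `N+1` vertices: vertex idempotents `e i`
and arrows `x i : i → i+1`, `y i : i+1 → i`. -/
inductive PGen (N : ℕ) : Type
  | e : Fin (N + 1) → PGen N
  | x : Fin N → PGen N
  | y : Fin N → PGen N

namespace PGen

/-- The defining relations of the preprojective algebra of type `A_{N+1}`:
path algebra relations together with `x₁y₂ = 0`, `x_iy_{i+1} − y_ix_{i−1} = 0`,
`y_Nx_{N−1} = 0` (in the 1-indexed notation of the paper). -/
inductive PRel (k : Type) [Field k] (N : ℕ) :
    FreeAlgebra k (PGen N) → FreeAlgebra k (PGen N) → Prop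
  | sum : PRel k N (∑ i : Fin (N + 1), FreeAlgebra.ι k (e i)) 1
  | idem : ∀ i, PRel k N (FreeAlgebra.ι k (e i) * FreeAlgebra.ι k (e i)) (FreeAlgebra.ι k (e i))
  | orth : ∀ i j, i ≠ j → PRel k N (FreeAlgebra.ι k (e i) * FreeAlgebra.ι k (e j)) 0
  | xsrc : ∀ i : Fin N,
      PRel k N (FreeAlgebra.ι k (e i.castSucc) * FreeAlgebra.ι k (x i)) (FreeAlgebra.ι k (x i))
  | xtgt : ∀ i : Fin N,
      PRel k N (FreeAlgebra.ι k (x i) * FreeAlgebra.ι k (e i.succ)) (FreeAlgebra.ι k (x i))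
  | ysrc : ∀ i : Fin N,
      PRel k N (FreeAlgebra.ι k (e i.succ) * FreeAlgebra.ι k (y i)) (FreeAlgebra.ι k (y i))
  | ytgt : ∀ i : Fin N,
      PRel k N (FreeAlgebra.ι k (y i) * FreeAlgebra.ι k (e i.castSucc)) (FreeAlgebra.ι k (y i))
  | bdry0 : ∀ i : Fin N, (i : ℕ) = 0 →
      PRel k N (FreeAlgebra.ι k (x i) * FreeAlgebra.ι k (y i)) 0
  | middle : ∀ i j : Fin N, (i : ℕ) + 1 = j →
      PRel k N (FreeAlgebra.ι k (x j) * FreeAlgebra.ι k (y j))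
        (FreeAlgebra.ι k (y i) * FreeAlgebra.ι k (x i))
  | bdryN : ∀ i : Fin N, (i : ℕ) = N - 1 →
      PRel k N (FreeAlgebra.ι k (y i) * FreeAlgebra.ι k (x i)) 0

end PGen

/-- The preprojective algebra `Π_{N+1}` of type `A_{N+1}`. -/
def PiA (k : Type) [Field k] (N : ℕ) : Type := RingQuot (PGen.PRel k N)

noncomputable instance (k : Type) [Field k] (N : ℕ) : Ring (PiA k N) :=
  inferInstanceAs (Ring (RingQuot (PGen.PRel k N)))

noncomputable instance (k : Type) [Field k] (N : ℕ) : Algebra k (PiA k N) :=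
  inferInstanceAs (Algebra k (RingQuot (PGen.PRel k N)))

/-- Vertex idempotents of `Π_{N+1}`. -/
noncomputable def eP (k : Type) [Field k] (N : ℕ) (i : Fin (N + 1)) : PiA k N :=
  RingQuot.mkAlgHom k (PGen.PRel k N) (FreeAlgebra.ι k (PGen.e i))

/-- Arrows `x` of `Π_{N+1}`. -/
noncomputable def xP (k : Type) [Field k] (N : ℕ) (i : Fin N) : PiA k N :=
  RingQuot.mkAlgHom k (PGen.PRel k N) (FreeAlgebra.ι k (PGen.x i))

/-- Arrows `y` of `Π_{N+1}`. -/
noncomputable def yP (k : Type) [Field k] (N : ℕ) (i : Fin N) : PiA k N :=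
  RingQuot.mkAlgHom k (PGen.PRel k N) (FreeAlgebra.ι k (PGen.y i))

/-- The relations killing the arrows `y`, presenting `kA⃗_n` as a quotient of `Π_n`. -/
def yKill (k : Type) [Field k] (N : ℕ) : PiA k N → PiA k N → Prop :=
  fun u v => (∃ i : Fin N, u = yP k N i) ∧ v = 0

/-!
Shifting all indices up inverts `π^r : Π_n → Π_{n-1}` modulo any two-sided ideal of `Π_n`
containing `e₀`. With `Y = ∑ y_j`, the ideal `{a | a Π_n Y = 0}` contains `e₀`, because `e₀ Π_n` is
spanned by the paths `x₀ ⋯ x_{t-1}`, none of which can be followed by an arrow `y`. Hence `a Y = 0`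
whenever `π^r a = 0`, and right multiplication by `Y` descends along `π^r` to a `k`-linear map
`f : Π_{n-1} → Π_n` with `f (π^r a) = a Y`. It sends `e_i` to `e_{i+1} Y = y_i`, it is left
`Π_n`-linear through `π^r` by construction, and right linear through `π^ℓ` because the identity
`f (π^ℓ b) = Y b` is checked on generators and propagates to products by left linearity.

For injectivity, `Π_n` acts by upper triangular matrices `!![π^r z, D z; 0, π^ℓ z̄]` over
`Π_{n-1}`, where `z̄` kills the arrows `y` and `D` is the twisted derivation with `D y_j = e_j`.
As `D Y = ∑ e_j = 1` and `Ȳ = 0`, the corner entry gives `D (a Y) = π^r a`, a left inverse of `f`.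
Finally the image of `f` is a two-sided ideal containing every `y_j`, so it is the kernel of
`Π_n ↠ kA⃗_n`.
-/

namespace PiA

open PGen

variable {k : Type} [Field k] {N : ℕ}

section Relations

variable (k N) in
noncomputable def mk : FreeAlgebra k (PGen N) →ₐ[k] PiA k N := RingQuot.mkAlgHom k (PRel k N)

@[simp] lemma mk_ι_e (i : Fin (N + 1)) : mk k N (FreeAlgebra.ι k (e i)) = eP k N i := rfl
@[simp] lemma mk_ι_x (i : Fin N) : mk k N (FreeAlgebra.ι k (x i)) = xP k N i := rfl
@[simp] lemma mk_ι_y (i : Fin N) : mk k N (FreeAlgebra.ι k (y i)) = yP k N i := rfl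

lemma mk_rel {u v : FreeAlgebra k (PGen N)} (h : PRel k N u v) : mk k N u = mk k N v :=
  RingQuot.mkAlgHom_rel k h

lemma eP_sum : ∑ i, eP k N i = 1 := by
  simpa using mk_rel (k := k) (N := N) .sum

lemma eP_mul_eP_self (i : Fin (N + 1)) : eP k N i * eP k N i = eP k N i := by
  simpa using mk_rel (k := k) (.idem i)

lemma eP_mul_eP_of_ne {i j : Fin (N + 1)} (h : i ≠ j) : eP k N i * eP k N j = 0 := by
  simpa using mk_rel (k := k) (.orth i j h)

lemma eP_castSucc_mul_xP (i : Fin N) : eP k N i.castSucc * xP k N i = xP k N i := by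
  simpa using mk_rel (k := k) (.xsrc i)

lemma xP_mul_eP_succ (i : Fin N) : xP k N i * eP k N i.succ = xP k N i := by
  simpa using mk_rel (k := k) (.xtgt i)

lemma eP_succ_mul_yP (i : Fin N) : eP k N i.succ * yP k N i = yP k N i := by
  simpa using mk_rel (k := k) (.ysrc i)

lemma yP_mul_eP_castSucc (i : Fin N) : yP k N i * eP k N i.castSucc = yP k N i := by
  simpa using mk_rel (k := k) (.ytgt i)

lemma xP_mul_yP_of_val_eq_zero (i : Fin N) (h : (i : ℕ) = 0) : xP k N i * yP k N i = 0 := by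
  simpa using mk_rel (k := k) (.bdry0 i h)

lemma xP_mul_yP_eq_yP_mul_xP (i j : Fin N) (h : (i : ℕ) + 1 = j) :
    xP k N j * yP k N j = yP k N i * xP k N i := by
  simpa using mk_rel (k := k) (.middle i j h)

lemma yP_mul_xP_of_val_eq (i : Fin N) (h : (i : ℕ) = N - 1) : yP k N i * xP k N i = 0 := by
  simpa using mk_rel (k := k) (.bdryN i h)

end Relations

variable (k N) in
structure LiftData (A : Type*) [Semiring A] [Algebra k A] where
  e : Fin (N + 1) → A
  x : Fin N → A
  y : Fin N → A
  sum_e : ∑ i, e i = 1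
  e_mul_e_self : ∀ i, e i * e i = e i
  e_mul_e_of_ne : ∀ i j, i ≠ j → e i * e j = 0
  e_mul_x : ∀ i, e i.castSucc * x i = x i
  x_mul_e : ∀ i, x i * e i.succ = x i
  e_mul_y : ∀ i, e i.succ * y i = y i
  y_mul_e : ∀ i, y i * e i.castSucc = y i
  x_mul_y_of_val_eq_zero : ∀ i : Fin N, (i : ℕ) = 0 → x i * y i = 0
  x_mul_y_eq_y_mul_x : ∀ i j : Fin N, (i : ℕ) + 1 = j → x j * y j = y i * x i
  y_mul_x_of_val_eq : ∀ i : Fin N, (i : ℕ) = N - 1 → y i * x i = 0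

namespace LiftData

variable {A : Type*} [Semiring A] [Algebra k A] (D : LiftData k N A)

def gens : PGen N → A
  | .e i => D.e i
  | .x i => D.x i
  | .y i => D.y i

lemma respects_rel ⦃u v : FreeAlgebra k (PGen N)⦄ (h : PRel k N u v) :
    FreeAlgebra.lift k D.gens u = FreeAlgebra.lift k D.gens v := by
  cases h
  case middle i j h => simpa [gens] using D.x_mul_y_eq_y_mul_x i j h
  all_goals simp [gens, D.sum_e, D.e_mul_e_self, D.e_mul_e_of_ne, D.e_mul_x, D.x_mul_e,
    D.e_mul_y, D.y_mul_e, D.x_mul_y_of_val_eq_zero, D.y_mul_x_of_val_eq, *]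

noncomputable def lift : PiA k N →ₐ[k] A :=
  RingQuot.liftAlgHom k ⟨FreeAlgebra.lift k D.gens, D.respects_rel⟩

lemma lift_mk (w : FreeAlgebra k (PGen N)) : D.lift (PiA.mk k N w) = FreeAlgebra.lift k D.gens w :=
  RingQuot.liftAlgHom_mkAlgHom_apply k _ _ w

@[simp] lemma lift_eP (i : Fin (N + 1)) : D.lift (eP k N i) = D.e i := by
  rw [← mk_ι_e, lift_mk, FreeAlgebra.lift_ι_apply, gens]

@[simp] lemma lift_xP (i : Fin N) : D.lift (xP k N i) = D.x i := by
  rw [← mk_ι_x, lift_mk, FreeAlgebra.lift_ι_apply, gens]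

@[simp] lemma lift_yP (i : Fin N) : D.lift (yP k N i) = D.y i := by
  rw [← mk_ι_y, lift_mk, FreeAlgebra.lift_ι_apply, gens]

end LiftData

lemma mk_surjective : Function.Surjective (mk k N) := RingQuot.mkAlgHom_surjective k _

@[elab_as_elim]
lemma induction_on {P : PiA k N → Prop} (z : PiA k N)
    (algebraMap : ∀ c : k, P (algebraMap k (PiA k N) c))
    (add : ∀ a b, P a → P b → P (a + b)) (mul : ∀ a b, P a → P b → P (a * b))
    (eP : ∀ i, P (eP k N i)) (xP : ∀ i, P (xP k N i)) (yP : ∀ i, P (yP k N i)) : P z := by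
  obtain ⟨w, rfl⟩ := mk_surjective z
  induction w using FreeAlgebra.induction with
  | grade0 c => simpa using algebraMap c
  | grade1 g =>
    cases g with
    | e i => exact eP i
    | x i => exact xP i
    | y i => exact yP i
  | mul a b ha hb => simpa using mul _ _ ha hb
  | add a b ha hb => simpa using add _ _ ha hb

lemma algHom_ext {A : Type*} [Semiring A] [Algebra k A] {F G : PiA k N →ₐ[k] A}
    (he : ∀ i, F (eP k N i) = G (eP k N i)) (hx : ∀ i, F (xP k N i) = G (xP k N i))
    (hy : ∀ i, F (yP k N i) = G (yP k N i)) : F = G := by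
  ext z
  induction z using induction_on with
  | algebraMap c => simp
  | add a b ha hb => simp [ha, hb]
  | mul a b ha hb => simp [ha, hb]
  | eP i => exact he i
  | xP i => exact hx i
  | yP i => exact hy i

section Products

lemma eP_mul_eP (i j : Fin (N + 1)) : eP k N i * eP k N j = if i = j then eP k N i else 0 := by
  split_ifs with h
  · rw [h, eP_mul_eP_self]
  · exact eP_mul_eP_of_ne h

lemma xP_mul_eP (a : Fin N) (v : Fin (N + 1)) :
    xP k N a * eP k N v = if v = a.succ then xP k N a else 0 := by
  rw [← xP_mul_eP_succ a, mul_assoc, eP_mul_eP]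
  split_ifs with h h' <;> simp_all [eq_comm]

lemma eP_mul_yP (v : Fin (N + 1)) (a : Fin N) :
    eP k N v * yP k N a = if v = a.succ then yP k N a else 0 := by
  rw [← eP_succ_mul_yP a, ← mul_assoc, eP_mul_eP]
  split_ifs with h <;> simp [h]

lemma yP_mul_eP (a : Fin N) (v : Fin (N + 1)) :
    yP k N a * eP k N v = if v = a.castSucc then yP k N a else 0 := by
  rw [← yP_mul_eP_castSucc a, mul_assoc, eP_mul_eP]
  split_ifs with h h' <;> simp_all [eq_comm]

lemma xP_mul_yP_of_ne {a b : Fin N} (h : a ≠ b) : xP k N a * yP k N b = 0 := by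
  rw [← eP_succ_mul_yP b, ← mul_assoc, xP_mul_eP, if_neg (by simpa [eq_comm] using h), zero_mul]

lemma yP_mul_xP_of_ne {a b : Fin N} (h : a ≠ b) : yP k N a * xP k N b = 0 := by
  rw [← eP_castSucc_mul_xP b, ← mul_assoc, yP_mul_eP, if_neg (by simpa [eq_comm] using h),
    zero_mul]

lemma yP_mul_yP_of_ne {a b : Fin N} (h : b.succ ≠ a.castSucc) : yP k N a * yP k N b = 0 := by
  rw [← eP_succ_mul_yP b, ← mul_assoc, yP_mul_eP, if_neg h, zero_mul]

end Products

section Paths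

variable (k N) in
noncomputable def xPath : Fin (N + 1) → PiA k N :=
  Fin.induction (eP k N 0) fun i p => p * xP k N i

@[simp] lemma xPath_zero : xPath k N 0 = eP k N 0 := rfl

@[simp] lemma xPath_succ (i : Fin N) : xPath k N i.succ = xPath k N i.castSucc * xP k N i :=
  Fin.induction_succ _ _ i

lemma xPath_mul_eP (t v : Fin (N + 1)) :
    xPath k N t * eP k N v = if v = t then xPath k N t else 0 := by
  induction t using Fin.induction with
  | zero => simp [eP_mul_eP, eq_comm]
  | succ i _ => simp [mul_assoc, xP_mul_eP]

lemma xPath_mul_xP (t : Fin (N + 1)) (a : Fin N) :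
    xPath k N t * xP k N a = if a.castSucc = t then xPath k N a.succ else 0 := by
  rw [← eP_castSucc_mul_xP a, ← mul_assoc, xPath_mul_eP]
  split_ifs with h
  · subst h; rw [xPath_succ]
  · rw [zero_mul]

lemma xPath_mul_yP (t : Fin (N + 1)) (j : Fin N) : xPath k N t * yP k N j = 0 := by
  induction t using Fin.induction generalizing j with
  | zero => simp [eP_mul_yP, (Fin.succ_ne_zero j).symm]
  | succ t ih =>
    rw [xPath_succ, mul_assoc]
    obtain rfl | hj := eq_or_ne t j
    · by_cases ht : (t : ℕ) = 0
      · rw [xP_mul_yP_of_val_eq_zero t ht, mul_zero]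
      · rw [xP_mul_yP_eq_yP_mul_xP ⟨t - 1, by omega⟩ t (by simp; omega), ← mul_assoc, ih,
          zero_mul]
    · rw [xP_mul_yP_of_ne hj, mul_zero]

lemma mul_mem_span_xPath {u : PiA k N} (hu : u ∈ Submodule.span k (Set.range (xPath k N)))
    (z : PiA k N) : u * z ∈ Submodule.span k (Set.range (xPath k N)) := by
  induction z using induction_on generalizing u with
  | algebraMap c => simpa [← Algebra.commutes, ← Algebra.smul_def] using Submodule.smul_mem _ c hu
  | add a b ha hb => rw [mul_add]; exact add_mem (ha hu) (hb hu)
  | mul a b ha hb => rw [← mul_assoc]; exact hb (ha hu)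
  | eP v | xP v | yP v =>
    induction hu using Submodule.span_induction with
    | mem p hp =>
      obtain ⟨t, rfl⟩ := hp
      simp only [xPath_mul_eP, xPath_mul_xP, xPath_mul_yP]
      try split_ifs
      all_goals first | exact zero_mem _ | exact Submodule.subset_span ⟨_, rfl⟩
    | zero => simp
    | add p q _ _ hp hq => rw [add_mul]; exact add_mem hp hq
    | smul c p _ hp => rw [smul_mul_assoc]; exact Submodule.smul_mem _ c hp

lemma eP_zero_mul_mul_yP (z : PiA k N) (j : Fin N) : eP k N 0 * z * yP k N j = 0 := by
  have hz := mul_mem_span_xPath (Submodule.subset_span ⟨0, xPath_zero⟩) z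
  generalize eP k N 0 * z = p at hz ⊢
  induction hz using Submodule.span_induction with
  | mem p hp => obtain ⟨t, rfl⟩ := hp; exact xPath_mul_yP t j
  | zero => simp
  | add p q _ _ hp hq => rw [add_mul, hp, hq, add_zero]
  | smul c p _ hp => rw [smul_mul_assoc, hp, smul_zero]

end Paths

section ySum

variable (k N) in
noncomputable def ySum : PiA k N := ∑ j, yP k N j

lemma eP_zero_mul_mul_ySum (z : PiA k N) : eP k N 0 * z * ySum k N = 0 := by
  simp [ySum, Finset.mul_sum, eP_zero_mul_mul_yP]

lemma eP_succ_mul_ySum (j : Fin N) : eP k N j.succ * ySum k N = yP k N j := by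
  simp [ySum, Finset.mul_sum, eP_mul_yP]

lemma ySum_mul_eP_castSucc (j : Fin N) : ySum k N * eP k N j.castSucc = yP k N j := by
  simp [ySum, Finset.sum_mul, yP_mul_eP]

lemma ySum_mul_eP_last : ySum k N * eP k N (Fin.last N) = 0 := by
  simp [ySum, Finset.sum_mul, yP_mul_eP, (Fin.castSucc_ne_last _).symm]

lemma xP_succ_mul_ySum (i : Fin N) :
    xP k (N + 1) i.succ * ySum k (N + 1) = ySum k (N + 1) * xP k (N + 1) i.castSucc := by
  rw [ySum, Finset.mul_sum, Finset.sum_mul, Fintype.sum_eq_single i.succ fun j hj =>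
      xP_mul_yP_of_ne hj.symm, Fintype.sum_eq_single i.castSucc fun j hj => yP_mul_xP_of_ne hj]
  exact xP_mul_yP_eq_yP_mul_xP _ _ (by simp)

lemma ySum_mul_xP_last : ySum k (N + 1) * xP k (N + 1) (Fin.last N) = 0 := by
  rw [ySum, Finset.sum_mul, Fintype.sum_eq_single (Fin.last N) fun j hj => yP_mul_xP_of_ne hj]
  exact yP_mul_xP_of_val_eq _ (by simp)

lemma yP_succ_mul_ySum (i : Fin N) :
    yP k (N + 1) i.succ * ySum k (N + 1) = ySum k (N + 1) * yP k (N + 1) i.castSucc := by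
  rw [ySum, Finset.mul_sum, Finset.sum_mul,
    Fintype.sum_eq_single i.castSucc fun j hj => yP_mul_yP_of_ne (by simpa using hj),
    Fintype.sum_eq_single i.succ fun j hj => yP_mul_yP_of_ne (by simp [Fin.ext_iff] at hj ⊢; omega)]

lemma ySum_mul_yP_last : ySum k (N + 1) * yP k (N + 1) (Fin.last N) = 0 := by
  refine Finset.sum_mul .. |>.trans (Finset.sum_eq_zero fun j _ => yP_mul_yP_of_ne ?_)
  simpa [Fin.ext_iff] using (Fin.castSucc_lt_last j).ne'

end ySum

section Inflation

variable (k) (m : ℕ)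

noncomputable def pirData : LiftData k (m + 1) (PiA k m) where
  e := Fin.cases 0 (eP k m)
  x := Fin.cases 0 (xP k m)
  y := Fin.cases 0 (yP k m)
  sum_e := by rw [Fin.sum_univ_succ]; simp [eP_sum]
  e_mul_e_self i := by cases i using Fin.cases <;> simp [eP_mul_eP_self]
  e_mul_e_of_ne i j h := by
    cases i using Fin.cases <;> cases j using Fin.cases <;> simp_all [eP_mul_eP_of_ne]
  e_mul_x i := by cases i using Fin.cases <;> simp [eP_castSucc_mul_xP]
  x_mul_e i := by cases i using Fin.cases <;> simp [xP_mul_eP_succ]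
  e_mul_y i := by cases i using Fin.cases <;> simp [eP_succ_mul_yP]
  y_mul_e i := by cases i using Fin.cases <;> simp [yP_mul_eP_castSucc]
  x_mul_y_of_val_eq_zero i h := by cases i using Fin.cases <;> simp_all
  x_mul_y_eq_y_mul_x i j h := by
    cases j using Fin.cases with
    | zero => simp at h
    | succ j =>
      cases i using Fin.cases with
      | zero => simpa using xP_mul_yP_of_val_eq_zero j (by simpa using h.symm)
      | succ i => simpa using xP_mul_yP_eq_yP_mul_xP i j (by simpa using h)
  y_mul_x_of_val_eq i h := by
    cases i using Fin.cases with
    | zero => simp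
    | succ i => simpa using yP_mul_xP_of_val_eq i (by simp at h; omega)

noncomputable def pilData : LiftData k (m + 1) (PiA k m) where
  e := Fin.lastCases 0 (eP k m)
  x := Fin.lastCases 0 (xP k m)
  y := Fin.lastCases 0 (yP k m)
  sum_e := by rw [Fin.sum_univ_castSucc]; simp [eP_sum]
  e_mul_e_self i := by cases i using Fin.lastCases <;> simp [eP_mul_eP_self]
  e_mul_e_of_ne i j h := by
    cases i using Fin.lastCases <;> cases j using Fin.lastCases <;> simp_all [eP_mul_eP_of_ne]
  e_mul_x i := by cases i using Fin.lastCases <;> simp [eP_castSucc_mul_xP]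
  x_mul_e i := by
    cases i using Fin.lastCases <;> simp [-Fin.castSucc_succ, Fin.succ_castSucc, xP_mul_eP_succ]
  e_mul_y i := by
    cases i using Fin.lastCases <;> simp [-Fin.castSucc_succ, Fin.succ_castSucc, eP_succ_mul_yP]
  y_mul_e i := by cases i using Fin.lastCases <;> simp [yP_mul_eP_castSucc]
  x_mul_y_of_val_eq_zero i h := by
    cases i using Fin.lastCases <;> simp_all [xP_mul_yP_of_val_eq_zero]
  x_mul_y_eq_y_mul_x i j h := by
    cases i using Fin.lastCases with
    | last => simp at h; omega
    | cast i =>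
      cases j using Fin.lastCases with
      | last => simpa using (yP_mul_xP_of_val_eq i (by simp at h; omega)).symm
      | cast j => simpa using xP_mul_yP_eq_yP_mul_xP i j (by simpa using h)
  y_mul_x_of_val_eq i h := by
    cases i using Fin.lastCases with
    | last => simp
    | cast i => simp at h; omega

noncomputable def pir : PiA k (m + 1) →ₐ[k] PiA k m := (pirData k m).lift

noncomputable def pil : PiA k (m + 1) →ₐ[k] PiA k m := (pilData k m).lift

@[simp] lemma pir_eP_zero : pir k m (eP k (m + 1) 0) = 0 := by simp [pir, pirData]
@[simp] lemma pir_eP_succ (i : Fin (m + 1)) : pir k m (eP k (m + 1) i.succ) = eP k m i := by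
  simp [pir, pirData]
@[simp] lemma pir_xP_zero : pir k m (xP k (m + 1) 0) = 0 := by simp [pir, pirData]
@[simp] lemma pir_xP_succ (i : Fin m) : pir k m (xP k (m + 1) i.succ) = xP k m i := by
  simp [pir, pirData]
@[simp] lemma pir_yP_zero : pir k m (yP k (m + 1) 0) = 0 := by simp [pir, pirData]
@[simp] lemma pir_yP_succ (i : Fin m) : pir k m (yP k (m + 1) i.succ) = yP k m i := by
  simp [pir, pirData]

@[simp] lemma pil_eP_castSucc (i : Fin (m + 1)) :
    pil k m (eP k (m + 1) i.castSucc) = eP k m i := by simp [pil, pilData]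
@[simp] lemma pil_eP_last : pil k m (eP k (m + 1) (Fin.last (m + 1))) = 0 := by
  simp [pil, pilData]
@[simp] lemma pil_xP_castSucc (i : Fin m) : pil k m (xP k (m + 1) i.castSucc) = xP k m i := by
  simp [pil, pilData]
@[simp] lemma pil_xP_last : pil k m (xP k (m + 1) (Fin.last m)) = 0 := by simp [pil, pilData]
@[simp] lemma pil_yP_castSucc (i : Fin m) : pil k m (yP k (m + 1) i.castSucc) = yP k m i := by
  simp [pil, pilData]
@[simp] lemma pil_yP_last : pil k m (yP k (m + 1) (Fin.last m)) = 0 := by simp [pil, pilData]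

lemma pir_surjective : Function.Surjective (pir k m) := by
  intro u
  induction u using induction_on with
  | algebraMap c => exact ⟨algebraMap k _ c, AlgHom.commutes _ c⟩
  | add a b ha hb =>
    obtain ⟨a, rfl⟩ := ha; obtain ⟨b, rfl⟩ := hb; exact ⟨a + b, map_add _ a b⟩
  | mul a b ha hb =>
    obtain ⟨a, rfl⟩ := ha; obtain ⟨b, rfl⟩ := hb; exact ⟨a * b, map_mul _ a b⟩
  | eP i => exact ⟨eP k (m + 1) i.succ, by simp⟩
  | xP i => exact ⟨xP k (m + 1) i.succ, by simp⟩
  | yP i => exact ⟨yP k (m + 1) i.succ, by simp⟩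

end Inflation

section Kernel

variable (k N) in
noncomputable def ySumAnn : TwoSidedIdeal (PiA k N) :=
  .mk' {a | ∀ d, a * d * ySum k N = 0} (by simp) (fun ha hb d => by simp [add_mul, ha d, hb d])
    (fun ha d => by simp [ha d]) (fun {a _} hb d => by rw [mul_assoc a, mul_assoc a, hb, mul_zero])
    (fun {a b} ha d => by rw [mul_assoc a b, ha])

variable (k N) in
noncomputable def annMk : PiA k N →ₐ[k] (ySumAnn k N).ringCon.Quotient := RingCon.mkₐ k _

lemma annMk_eq_zero_iff (a : PiA k N) : annMk k N a = 0 ↔ ∀ d, a * d * ySum k N = 0 := by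
  rw [annMk, RingCon.mkₐ_apply, ← RingCon.coe_zero, RingCon.eq, TwoSidedIdeal.rel_iff, sub_zero,
    ySumAnn, TwoSidedIdeal.mem_mk', Set.mem_ofPred_eq]

lemma annMk_eP_zero : annMk k N (eP k N 0) = 0 :=
  (annMk_eq_zero_iff _).2 eP_zero_mul_mul_ySum

variable (k) (m : ℕ)

noncomputable def pirInvData : LiftData k m (ySumAnn k (m + 1)).ringCon.Quotient where
  e v := annMk k (m + 1) (eP k (m + 1) v.succ)
  x a := annMk k (m + 1) (xP k (m + 1) a.succ)
  y a := annMk k (m + 1) (yP k (m + 1) a.succ)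
  sum_e := by
    have := congrArg (annMk k (m + 1)) (eP_sum (k := k) (N := m + 1))
    rwa [Fin.sum_univ_succ, map_add, map_sum, annMk_eP_zero, zero_add, map_one] at this
  e_mul_e_self i := by rw [← map_mul, eP_mul_eP_self]
  e_mul_e_of_ne i j h := by rw [← map_mul, eP_mul_eP_of_ne (by simpa using h), map_zero]
  e_mul_x i := by rw [← map_mul, Fin.succ_castSucc, eP_castSucc_mul_xP]
  x_mul_e i := by rw [← map_mul, xP_mul_eP_succ]
  e_mul_y i := by rw [← map_mul, eP_succ_mul_yP]
  y_mul_e i := by rw [← map_mul, Fin.succ_castSucc, yP_mul_eP_castSucc]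
  x_mul_y_of_val_eq_zero i h := by
    have h0 : (i.castSucc.castSucc : Fin (m + 2)) = 0 := Fin.ext (by simpa using h)
    rw [← map_mul, xP_mul_yP_eq_yP_mul_xP i.castSucc i.succ (by simp), ← eP_castSucc_mul_xP,
      h0, map_mul, map_mul, annMk_eP_zero, zero_mul, mul_zero]
  x_mul_y_eq_y_mul_x i j h := by
    rw [← map_mul, ← map_mul, xP_mul_yP_eq_yP_mul_xP i.succ j.succ (by simpa using h)]
  y_mul_x_of_val_eq i h := by
    rw [← map_mul, yP_mul_xP_of_val_eq i.succ (by simp; omega), map_zero]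

noncomputable def pirInv : PiA k m →ₐ[k] (ySumAnn k (m + 1)).ringCon.Quotient :=
  (pirInvData k m).lift

lemma pirInv_comp_pir : (pirInv k m).comp (pir k m) = annMk k (m + 1) := by
  have hx : annMk k (m + 1) (xP k (m + 1) 0) = 0 := by
    rw [← eP_castSucc_mul_xP, map_mul, Fin.castSucc_zero, annMk_eP_zero, zero_mul]
  have hy : annMk k (m + 1) (yP k (m + 1) 0) = 0 := by
    rw [← yP_mul_eP_castSucc, map_mul, Fin.castSucc_zero, annMk_eP_zero, mul_zero]
  refine algHom_ext (fun v => ?_) (fun a => ?_) (fun a => ?_)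
  · cases v using Fin.cases <;> simp [pirInv, pirInvData, annMk_eP_zero]
  · cases a using Fin.cases <;> simp [pirInv, pirInvData, hx]
  · cases a using Fin.cases <;> simp [pirInv, pirInvData, hy]

variable {k m} in
lemma mul_ySum_eq_zero_of_pir_eq_zero {a : PiA k (m + 1)} (h : pir k m a = 0) :
    a * ySum k (m + 1) = 0 := by
  have := (annMk_eq_zero_iff a).1 (by rw [← pirInv_comp_pir, AlgHom.comp_apply, h, map_zero]) 1
  rwa [mul_one] at this

end Kernel

section Embedding

variable (k) (m : ℕ)

noncomputable def yEmbedding : PiA k m →ₗ[k] PiA k (m + 1) :=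
  (LinearMap.ker (pir k m).toLinearMap).liftQ (LinearMap.mulRight k (ySum k (m + 1)))
      (fun _ ha => mul_ySum_eq_zero_of_pir_eq_zero ha) ∘ₗ
    ((pir k m).toLinearMap.quotKerEquivOfSurjective (pir_surjective k m)).symm.toLinearMap

variable {k m}

lemma yEmbedding_pir (a : PiA k (m + 1)) : yEmbedding k m (pir k m a) = a * ySum k (m + 1) := by
  have h := LinearMap.quotKerEquivOfSurjective_symm_apply (pir k m).toLinearMap
    (pir_surjective k m) a
  rw [yEmbedding, LinearMap.comp_apply, LinearEquiv.coe_coe, ← AlgHom.toLinearMap_apply, h]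
  rfl

lemma yEmbedding_eP (i : Fin (m + 1)) : yEmbedding k m (eP k m i) = yP k (m + 1) i := by
  simpa [eP_succ_mul_ySum] using yEmbedding_pir (eP k (m + 1) i.succ)

lemma yEmbedding_pir_mul (a : PiA k (m + 1)) (u : PiA k m) :
    yEmbedding k m (pir k m a * u) = a * yEmbedding k m u := by
  obtain ⟨c, rfl⟩ := pir_surjective k m u
  rw [← map_mul, yEmbedding_pir, yEmbedding_pir, mul_assoc]

lemma yEmbedding_pil (b : PiA k (m + 1)) : yEmbedding k m (pil k m b) = ySum k (m + 1) * b := by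
  induction b using induction_on with
  | algebraMap c => rw [AlgHom.commutes, ← AlgHom.commutes (pir k m), yEmbedding_pir,
      Algebra.commutes]
  | add a b ha hb => rw [map_add, map_add, ha, hb, mul_add]
  | mul a b ha hb =>
    obtain ⟨c, hc⟩ := pir_surjective k m (pil k m a)
    rw [map_mul, ← hc, yEmbedding_pir_mul, hb, ← mul_assoc, ← yEmbedding_pir, hc, ha, mul_assoc]
  | eP v =>
    cases v using Fin.lastCases with
    | last => simp [ySum_mul_eP_last]
    | cast i => simp [yEmbedding_eP, ySum_mul_eP_castSucc]
  | xP a =>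
    cases a using Fin.lastCases with
    | last => simp [ySum_mul_xP_last]
    | cast i => simpa [xP_succ_mul_ySum] using yEmbedding_pir (xP k (m + 1) i.succ)
  | yP a =>
    cases a using Fin.lastCases with
    | last => simp [ySum_mul_yP_last]
    | cast i => simpa [yP_succ_mul_ySum] using yEmbedding_pir (yP k (m + 1) i.succ)

lemma yEmbedding_mul_pil (u : PiA k m) (b : PiA k (m + 1)) :
    yEmbedding k m (u * pil k m b) = yEmbedding k m u * b := by
  obtain ⟨c, rfl⟩ := pir_surjective k m u
  rw [yEmbedding_pir_mul, yEmbedding_pil, yEmbedding_pir, mul_assoc]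

end Embedding

section Injectivity

variable {m : ℕ}

variable (k m) in
noncomputable def triangularData : LiftData k (m + 1) (Matrix (Fin 2) (Fin 2) (PiA k m)) where
  e v := !![pir k m (eP k (m + 1) v), 0; 0, pil k m (eP k (m + 1) v)]
  x a := !![pir k m (xP k (m + 1) a), 0; 0, pil k m (xP k (m + 1) a)]
  y a := !![pir k m (yP k (m + 1) a), eP k m a; 0, 0]
  sum_e := by
    ext i j; fin_cases i <;> fin_cases j <;> simp [Matrix.sum_apply, ← map_sum, eP_sum]
  e_mul_e_self i := by rw [Matrix.mul_fin_two]; simp [← map_mul, eP_mul_eP_self]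
  e_mul_e_of_ne i j h := by
    rw [Matrix.mul_fin_two, ← (Matrix.eta_fin_two 0).symm]
    simp [← map_mul, eP_mul_eP_of_ne h]
  e_mul_x i := by rw [Matrix.mul_fin_two]; simp only [← map_mul, eP_castSucc_mul_xP]; simp
  x_mul_e i := by rw [Matrix.mul_fin_two]; simp only [← map_mul, xP_mul_eP_succ]; simp
  e_mul_y i := by
    rw [Matrix.mul_fin_two]; simp only [← map_mul, eP_succ_mul_yP]; simp [eP_mul_eP_self]
  y_mul_e i := by
    rw [Matrix.mul_fin_two]; simp only [← map_mul, yP_mul_eP_castSucc]; simp [eP_mul_eP_self]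
  x_mul_y_of_val_eq_zero i h := by
    obtain rfl : i = 0 := Fin.ext h
    rw [Matrix.mul_fin_two, ← (Matrix.eta_fin_two 0).symm]
    simp only [← map_mul, xP_mul_yP_of_val_eq_zero 0 h]
    simp
  x_mul_y_eq_y_mul_x i j h := by
    rw [Matrix.mul_fin_two, Matrix.mul_fin_two]
    simp only [← map_mul, xP_mul_yP_eq_yP_mul_xP i j h]
    obtain ⟨i, rfl⟩ : ∃ i' : Fin m, i = i'.castSucc := ⟨⟨i, by have := j.isLt; omega⟩, rfl⟩
    obtain rfl : j = i.succ := Fin.ext (by simp at h ⊢; omega)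
    simp [xP_mul_eP_succ, eP_castSucc_mul_xP]
  y_mul_x_of_val_eq i h := by
    obtain rfl : i = Fin.last m := Fin.ext h
    rw [Matrix.mul_fin_two, ← (Matrix.eta_fin_two 0).symm]
    simp only [← map_mul, yP_mul_xP_of_val_eq _ h]
    simp

variable (k m) in
noncomputable def triangular : PiA k (m + 1) →ₐ[k] Matrix (Fin 2) (Fin 2) (PiA k m) :=
  (triangularData k m).lift

lemma triangular_apply_zero (z : PiA k (m + 1)) :
    triangular k m z 0 0 = pir k m z ∧ triangular k m z 1 0 = 0 := by
  induction z using induction_on with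
  | algebraMap c => simp [Matrix.algebraMap_matrix_apply]
  | add a b ha hb => simp [ha.1, ha.2, hb.1, hb.2]
  | mul a b ha hb => simp [Matrix.mul_apply, ha.1, ha.2, hb.1, hb.2]
  | eP v => simp [triangular, triangularData]
  | xP a => simp [triangular, triangularData]
  | yP a => simp [triangular, triangularData]

lemma triangular_mul_ySum (a : PiA k (m + 1)) :
    triangular k m (a * ySum k (m + 1)) 0 1 = pir k m a := by
  have hY : triangular k m (ySum k (m + 1)) = !![pir k m (ySum k (m + 1)), 1; 0, 0] := by
    ext i j
    fin_cases i <;> fin_cases j <;>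
      simp [ySum, Matrix.sum_apply, triangular, triangularData, eP_sum]
  simp [hY, Matrix.mul_apply, (triangular_apply_zero a).1]

lemma yEmbedding_injective : Function.Injective (yEmbedding k m) := by
  intro u v h
  obtain ⟨a, rfl⟩ := pir_surjective k m u
  obtain ⟨b, rfl⟩ := pir_surjective k m v
  rw [yEmbedding_pir, yEmbedding_pir] at h
  rw [← triangular_mul_ySum, h, triangular_mul_ySum]

end Injectivity

section Exactness

variable {m : ℕ}

variable (k m) in
noncomputable def yEmbeddingRange : TwoSidedIdeal (PiA k (m + 1)) :=
  .mk' (LinearMap.range (yEmbedding k m)) (zero_mem _) add_mem neg_mem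
    (fun {c _} ⟨u, hu⟩ => ⟨pir k m c * u, by rw [yEmbedding_pir_mul, hu]⟩)
    (fun {_ c} ⟨u, hu⟩ => ⟨u * pil k m c, by rw [yEmbedding_mul_pil, hu]⟩)

lemma mkRingHom_yKill_eq_zero_iff (z : PiA k (m + 1)) :
    RingQuot.mkRingHom (yKill k (m + 1)) z = 0 ↔ ∃ u, yEmbedding k m u = z := by
  constructor
  · intro hz
    have hrel : ∀ ⦃u v⦄, yKill k (m + 1) u v →
        (yEmbeddingRange k m).ringCon.mk' u = (yEmbeddingRange k m).ringCon.mk' v := by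
      rintro _ _ ⟨⟨j, rfl⟩, rfl⟩
      refine RingCon.eq _ |>.2 <| (TwoSidedIdeal.rel_iff _ _ _).2 ?_
      simpa [yEmbeddingRange] using ⟨eP k m j, yEmbedding_eP j⟩
    have := RingQuot.lift_mkRingHom_apply _ hrel z
    rw [hz, map_zero, eq_comm, ← RingCon.coe_zero, RingCon.coe_mk', RingCon.eq] at this
    simpa [TwoSidedIdeal.rel_iff, yEmbeddingRange] using this
  · rintro ⟨u, rfl⟩
    obtain ⟨a, rfl⟩ := pir_surjective k m u
    have hy : ∀ j, RingQuot.mkRingHom (yKill k (m + 1)) (yP k (m + 1) j) = 0 := fun j => by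
      simpa using RingQuot.mkRingHom_rel (r := yKill k (m + 1)) ⟨⟨j, rfl⟩, rfl⟩
    simp [yEmbedding_pir, ySum, hy]

end Exactness

end PiA

/-- For `n = m+2 ≥ 2` there is a short exact sequence of
`Π_n`-`Π_n`-bimodules `0 → Π_{n−1}⟨−1⟩ → Π_n → kA⃗_n → 0`: there are quotient maps
`π^ℓ, π^r : Π_n → Π_{n−1}` (killing the last, resp. first, vertex) and a `k`-linear
embedding `f : Π_{n−1} → Π_n` with `f(e_i) = y_{i+1}`, which is a map of bimodules for
the inflated bimodule structure, and whose image is exactly the kernel of the projection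
`Π_n ↠ kA⃗_n` killing the arrows `y`. -/
theorem stmt_16 (k : Type) [Field k] (m : ℕ) :
    ∃ (πl πr : PiA k (m + 1) →ₐ[k] PiA k m) (f : PiA k m →ₗ[k] PiA k (m + 1)),
      -- `π^r` kills the first vertex and shifts indices down
      πr (eP k (m + 1) 0) = 0 ∧
      (∀ i : Fin (m + 1), πr (eP k (m + 1) i.succ) = eP k m i) ∧
      πr (xP k (m + 1) 0) = 0 ∧
      (∀ i : Fin m, πr (xP k (m + 1) i.succ) = xP k m i) ∧
      πr (yP k (m + 1) 0) = 0 ∧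
      (∀ i : Fin m, πr (yP k (m + 1) i.succ) = yP k m i) ∧
      -- `π^ℓ` kills the last vertex
      (∀ i : Fin (m + 1), πl (eP k (m + 1) i.castSucc) = eP k m i) ∧
      πl (eP k (m + 1) (Fin.last (m + 1))) = 0 ∧
      (∀ i : Fin m, πl (xP k (m + 1) i.castSucc) = xP k m i) ∧
      πl (xP k (m + 1) (Fin.last m)) = 0 ∧
      (∀ i : Fin m, πl (yP k (m + 1) i.castSucc) = yP k m i) ∧
      πl (yP k (m + 1) (Fin.last m)) = 0 ∧
      -- the embedding sends `e_i` to `y_{i+1}` (degree shift `⟨−1⟩`)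
      (∀ i : Fin (m + 1), f (eP k m i) = yP k (m + 1) i) ∧
      -- `f` is a homomorphism for the inflated bimodule structure
      (∀ (a b : PiA k (m + 1)) (u : PiA k m), f (πr a * u * πl b) = a * f u * b) ∧
      -- short exactness
      Function.Injective f ∧
      (∀ z : PiA k (m + 1),
        RingQuot.mkRingHom (yKill k (m + 1)) z = 0 ↔ ∃ u : PiA k m, f u = z) ∧
      Function.Surjective (RingQuot.mkRingHom (yKill k (m + 1))) := by
  refine ⟨PiA.pil k m, PiA.pir k m, PiA.yEmbedding k m,
    PiA.pir_eP_zero k m, PiA.pir_eP_succ k m, PiA.pir_xP_zero k m, PiA.pir_xP_succ k m,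
    PiA.pir_yP_zero k m, PiA.pir_yP_succ k m,
    PiA.pil_eP_castSucc k m, PiA.pil_eP_last k m, PiA.pil_xP_castSucc k m, PiA.pil_xP_last k m,
    PiA.pil_yP_castSucc k m, PiA.pil_yP_last k m,
    PiA.yEmbedding_eP, fun a b u => ?_, PiA.yEmbedding_injective,
    PiA.mkRingHom_yKill_eq_zero_iff, RingQuot.mkRingHom_surjective _⟩
  rw [PiA.yEmbedding_mul_pil, PiA.yEmbedding_pir_mul]
end
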